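/- Let V be a finite-dimensional real inner product space, p ≥ 1, and let φ be an alternating p-form on V of comass at most one. Let v, w ∈ V be linearly independent, and suppose that for every unit vector u ∈ span{v,w} there exists an orthonormal (p−1)-tuple (f_1,…,f_{p−1}) of vectors orthogonal to span{v,w} such that (u, f_1,…,f_{p−1}) is a φ-plane. For real numbers a, b, c let B be the symmetric endomorphism B(x) = a⟨v,x⟩v + b(⟨w,x⟩v + ⟨v,x⟩w) + c⟨w,x⟩w. Then (λ_φ B)(e_1,…,e_p) ≥ 0 for every φ-plane (e_1,…,e_p) if and only if the 2×2 matrix [[a, b], [b, c]] is positive semidefinite. -/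

import Mathlib

/-!
Since `φ` has comass at most one, a `φ`-plane `e` maximises `φ` among orthonormal frames, so the
first variation of `φ` at `e` vanishes in every direction normal to the plane; together with
multilinearity this gives `φ(e₁, …, x, …, e_p) = ⟪e_j, x⟫`, and hence `(λ_φ A)(e) = ∑ ⟪e_j, A e_j⟫`
is the trace of `A` on the plane. For `B` this trace is `∑ Q(⟪v, e_j⟫, ⟪w, e_j⟫)` with `Q` the
quadratic form of `[[a, b], [b, c]]`, which gives one direction. Conversely, a φ-plane through a
unit vector `u ∈ span{v, w}` whose other vectors are normal to `span{v, w}` has trace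
`Q(⟪v, u⟫, ⟪w, u⟫)`, and since `v, w` are independent, `u ↦ (⟪v, u⟫, ⟪w, u⟫)` maps `span{v, w}`
onto `ℝ²`.
-/

open scoped RealInnerProductSpace
open Function

section

variable {V : Type*} [NormedAddCommGroup V] [InnerProductSpace ℝ V]

theorem Orthonormal.update_of_norm_eq_one {ι : Type*} [DecidableEq ι] {e : ι → V}
    (he : Orthonormal ℝ e) (j : ι) {y : V} (hy : ‖y‖ = 1) (hyo : ∀ i ≠ j, ⟪e i, y⟫ = 0) :
    Orthonormal ℝ (update e j y) := by
  rw [orthonormal_iff_ite] at he ⊢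
  intro i k
  by_cases hi : i = j <;> by_cases hk : k = j
  · simp [hi, hk, hy]
  · rw [hi, real_inner_comm]; simp [update_of_ne hk, Ne.symm hk, hyo k hk]
  · simp [hk, hi, hyo i hi]
  · simp [update_of_ne hi, update_of_ne hk, he]

namespace AlternatingMap

variable {ι : Type*} [DecidableEq ι] {φ : V [⋀^ι]→ₗ[ℝ] ℝ} {e : ι → V}

theorem apply_update_le_norm (hφ : ∀ u : ι → V, Orthonormal ℝ u → φ u ≤ 1)
    (he : Orthonormal ℝ e) (j : ι) {y : V} (hy : ∀ i ≠ j, ⟪e i, y⟫ = 0) :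
    φ (update e j y) ≤ ‖y‖ := by
  rcases eq_or_ne y 0 with rfl | hy0
  · simp
  have hny : ‖y‖ ≠ 0 := norm_ne_zero_iff.mpr hy0
  have hunit : ‖‖y‖⁻¹ • y‖ = 1 := by rw [norm_smul, norm_inv, norm_norm, inv_mul_cancel₀ hny]
  have hle := hφ _ (he.update_of_norm_eq_one j hunit fun i hi => by
    rw [real_inner_smul_right, hy i hi, mul_zero])
  calc φ (update e j y) = ‖y‖ * φ (update e j (‖y‖⁻¹ • y)) := by
        rw [map_update_smul, smul_eq_mul, ← mul_assoc, mul_inv_cancel₀ hny, one_mul]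
    _ ≤ ‖y‖ * 1 := by gcongr
    _ = ‖y‖ := mul_one _

theorem apply_update_eq_zero_of_forall_inner_eq_zero
    (hφ : ∀ u : ι → V, Orthonormal ℝ u → φ u ≤ 1) (he : Orthonormal ℝ e) (hφe : φ e = 1)
    (j : ι) {x : V} (hx : ∀ i, ⟪e i, x⟫ = 0) : φ (update e j x) = 0 := by
  set s := φ (update e j x)
  set N := ‖x‖ ^ 2
  -- the comass bound along `(N + 1) • e j + s • x` reads `(N + 1 + s²)² ≤ (N + 1)² + s² N`
  set y := (N + 1) • e j + s • x
  have hval : φ (update e j y) = (N + 1) + s ^ 2 := by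
    simp [y, hφe, s, sq]
  have hnorm : ‖y‖ ^ 2 = (N + 1) ^ 2 + s ^ 2 * N := by
    have hjj : ⟪e j, e j⟫ = 1 := real_inner_self_eq_norm_sq (e j) ▸ by simp [he.1 j]
    have hxx : ⟪x, x⟫ = N := real_inner_self_eq_norm_sq x
    rw [← real_inner_self_eq_norm_sq]
    simp only [y, inner_add_left, inner_add_right, real_inner_smul_left, real_inner_smul_right,
      real_inner_comm (e j) x, hx j, hjj, hxx]
    ring
  have hle := apply_update_le_norm hφ he j (y := y) fun i hi => by
    simp [y, inner_add_right, real_inner_smul_right, hx i, orthonormal_iff_ite.mp he, hi]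
  rw [hval] at hle
  have hN : 0 ≤ N := by positivity
  have : (N + 1 + s ^ 2) ^ 2 ≤ ‖y‖ ^ 2 := by gcongr
  nlinarith

theorem apply_update_eq_inner [Fintype ι]
    (hφ : ∀ u : ι → V, Orthonormal ℝ u → φ u ≤ 1) (he : Orthonormal ℝ e) (hφe : φ e = 1)
    (j : ι) (x : V) : φ (update e j x) = ⟪e j, x⟫ := by
  set r := x - ∑ i, ⟪e i, x⟫ • e i
  have hr : ∀ i, ⟪e i, r⟫ = 0 := fun i => by
    rw [inner_sub_right, he.inner_right_fintype, sub_self]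
  have hei : ∀ i, φ (update e j (e i)) = if i = j then 1 else 0 := fun i => by
    split_ifs with h
    · rw [h, update_eq_self, hφe]
    · exact φ.map_eq_zero_of_eq _ (by rw [update_self, update_of_ne h]) h
  calc φ (update e j x) = φ (update e j ((∑ i, ⟪e i, x⟫ • e i) + r)) := by
        rw [add_sub_cancel]
    _ = ∑ i, ⟪e i, x⟫ * φ (update e j (e i)) := by
        simp only [map_update_add, apply_update_eq_zero_of_forall_inner_eq_zero hφ he hφe j hr,
          add_zero, map_update_sum, map_update_smul, smul_eq_mul]
    _ = ⟪e j, x⟫ := by simp [hei]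

end AlternatingMap

theorem LinearIndependent.exists_mem_span_inner_eq {ι : Type*} [Fintype ι] {v : ι → V}
    (hv : LinearIndependent ℝ v) (c : ι → ℝ) :
    ∃ u ∈ Submodule.span ℝ (Set.range v), ∀ i, ⟪v i, u⟫ = c i := by
  set S := Submodule.span ℝ (Set.range v)
  have : FiniteDimensional ℝ S := .span_of_finite ℝ (Set.finite_range v)
  let T : S →ₗ[ℝ] ι → ℝ := LinearMap.pi fun i => (innerₛₗ ℝ (v i)).comp S.subtype
  have hT : Function.Injective T := by
    rw [← LinearMap.ker_eq_bot, Submodule.eq_bot_iff]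
    intro u hu
    have horth : ∀ y ∈ S, ⟪y, (u : V)⟫ = 0 := fun y hy =>
      Submodule.span_induction (fun _ ⟨i, hi⟩ => hi ▸ congr_fun hu i)
        (inner_zero_left _) (fun _ _ _ _ h₁ h₂ => by rw [inner_add_left, h₁, h₂, add_zero])
        (fun r _ _ h => by rw [real_inner_smul_left, h, mul_zero]) hy
    exact Subtype.ext (inner_self_eq_zero.mp (horth u u.2))
  have hrank : Module.finrank ℝ S = Module.finrank ℝ (ι → ℝ) := by
    rw [finrank_span_eq_card hv, Module.finrank_fintype_fun_eq_card]
  obtain ⟨u, hu⟩ := (LinearMap.injective_iff_surjective_of_finrank_eq_finrank hrank).mp hT c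
  exact ⟨u, u.2, fun i => congr_fun hu i⟩

theorem LinearMap.inner_map_self_nonneg_of_norm_eq_one {S : Submodule ℝ V} {T : V →ₗ[ℝ] V}
    (h : ∀ u ∈ S, ‖u‖ = 1 → 0 ≤ ⟪u, T u⟫) {u : V} (hu : u ∈ S) : 0 ≤ ⟪u, T u⟫ := by
  rcases eq_or_ne u 0 with rfl | hu0
  · simp
  have hnu : ‖u‖ ≠ 0 := norm_ne_zero_iff.mpr hu0
  have hunit : ‖‖u‖⁻¹ • u‖ = 1 := by rw [norm_smul, norm_inv, norm_norm, inv_mul_cancel₀ hnu]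
  have := h _ (S.smul_mem _ hu) hunit
  rw [map_smul, real_inner_smul_left, real_inner_smul_right] at this
  have : 0 ≤ ⟪u, T u⟫ * (‖u‖⁻¹ * ‖u‖⁻¹) := by linarith
  exact nonneg_of_mul_nonneg_left this (by positivity)

end

theorem Matrix.posSemidef_fin_two_iff {a b c : ℝ} :
    !![a, b; b, c].PosSemidef ↔ ∀ x y : ℝ, 0 ≤ a * x ^ 2 + 2 * b * x * y + c * y ^ 2 := by
  have hherm : !![a, b; b, c].IsHermitian := by
    ext i j; fin_cases i <;> fin_cases j <;> rfl
  simp only [posSemidef_iff_dotProduct_mulVec, hherm, true_and, dotProduct, mulVec,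
    Fin.sum_univ_two, star_trivial]
  refine ⟨fun h x y => ?_, fun h z => ?_⟩
  · have := h ![x, y]
    simp at this
    linarith
  · have := h (z 0) (z 1)
    simp
    linarith

theorem lambda_phi_two_vector_positivity_general
    {V : Type*} [NormedAddCommGroup V] [InnerProductSpace ℝ V] {q : ℕ}
    (φ : V [⋀^Fin (q + 1)]→ₗ[ℝ] ℝ)
    (hcomass : ∀ u : Fin (q + 1) → V, Orthonormal ℝ u → φ u ≤ 1)
    (v w : V) (hvw : LinearIndependent ℝ ![v, w])
    (hrich : ∀ u : V, u ∈ Submodule.span ℝ ({v, w} : Set V) → ‖u‖ = 1 →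
      ∃ f : Fin q → V, (∀ i, ⟪f i, v⟫ = 0 ∧ ⟪f i, w⟫ = 0) ∧
        Orthonormal ℝ (Fin.cons u f : Fin (q + 1) → V) ∧
        φ (Fin.cons u f) = 1)
    (a b c : ℝ) (B : V →ₗ[ℝ] V)
    (hB : ∀ x, B x = a • (⟪v, x⟫ • v) + b • (⟪w, x⟫ • v + ⟪v, x⟫ • w) + c • (⟪w, x⟫ • w)) :
    (∀ e : Fin (q + 1) → V, Orthonormal ℝ e → φ e = 1 →
        0 ≤ ∑ j, φ (Function.update e j (B (e j)))) ↔
      Matrix.PosSemidef !![a, b; b, c] := by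
  have hB0 : ∀ x, ⟪x, v⟫ = 0 ∧ ⟪x, w⟫ = 0 → B x = 0 := fun x ⟨hv, hw⟩ => by
    simp [hB, real_inner_comm x, hv, hw]
  have hQ : ∀ x, ⟪x, B x⟫ = a * ⟪v, x⟫ ^ 2 + 2 * b * ⟪v, x⟫ * ⟪w, x⟫ + c * ⟪w, x⟫ ^ 2 := by
    intro x
    simp only [hB, inner_add_right, real_inner_smul_right, real_inner_comm x]
    ring
  have htrace : ∀ e : Fin (q + 1) → V, Orthonormal ℝ e → φ e = 1 →
      ∑ j, φ (Function.update e j (B (e j))) = ∑ j, ⟪e j, B (e j)⟫ := fun e he hφe =>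
    Finset.sum_congr rfl fun j _ => φ.apply_update_eq_inner hcomass he hφe j _
  rw [Matrix.posSemidef_fin_two_iff]
  constructor
  · intro h x y
    have hunit : ∀ u ∈ Submodule.span ℝ {v, w}, ‖u‖ = 1 → 0 ≤ ⟪u, B u⟫ := fun u hu hu1 => by
      obtain ⟨f, hf, he, hφe⟩ := hrich u hu hu1
      simpa [htrace _ he hφe, Fin.sum_univ_succ, fun i => hB0 _ (hf i)] using h _ he hφe
    obtain ⟨u, hu, hinner⟩ := hvw.exists_mem_span_inner_eq ![x, y]
    rw [Matrix.range_cons_cons_empty] at hu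
    have hvu : ⟪v, u⟫ = x := hinner 0
    have hwu : ⟪w, u⟫ = y := hinner 1
    simpa [hQ, hvu, hwu] using B.inner_map_self_nonneg_of_norm_eq_one hunit hu
  · intro h e he hφe
    rw [htrace e he hφe]
    exact Finset.sum_nonneg fun j _ => hQ (e j) ▸ h _ _

/-- **Lemma 2.B.5** (Harvey–Lawson).  Let `v, w` be linearly independent, and suppose every
unit vector `u ∈ span{v,w}` extends by an orthonormal `(p-1)`-tuple orthogonal to `span{v,w}`
to a `φ`-plane.  Then `λ_φ(a v∘v + 2b v∘w + c w∘w)` is nonnegative on all `φ`-planes iff the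
matrix `[[a,b],[b,c]]` is positive semidefinite. -/
theorem lambda_phi_two_vector_positivity
    {V : Type*} [NormedAddCommGroup V] [InnerProductSpace ℝ V]
    [FiniteDimensional ℝ V] {q : ℕ}
    (φ : V [⋀^Fin (q + 1)]→ₗ[ℝ] ℝ)
    (hcomass : ∀ u : Fin (q + 1) → V, Orthonormal ℝ u → φ u ≤ 1)
    (v w : V) (hvw : LinearIndependent ℝ ![v, w])
    (hrich : ∀ u : V, u ∈ Submodule.span ℝ ({v, w} : Set V) → ‖u‖ = 1 →
      ∃ f : Fin q → V, (∀ i, ⟪f i, v⟫ = 0 ∧ ⟪f i, w⟫ = 0) ∧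
        Orthonormal ℝ (Fin.cons u f : Fin (q + 1) → V) ∧
        φ (Fin.cons u f) = 1)
    (a b c : ℝ) (B : V →ₗ[ℝ] V)
    (hB : ∀ x, B x = a • (⟪v, x⟫ • v) + b • (⟪w, x⟫ • v + ⟪v, x⟫ • w) + c • (⟪w, x⟫ • w)) :
    (∀ e : Fin (q + 1) → V, Orthonormal ℝ e → φ e = 1 →
        0 ≤ ∑ j, φ (Function.update e j (B (e j)))) ↔
      Matrix.PosSemidef !![a, b; b, c] :=
  lambda_phi_two_vector_positivity_general φ hcomass v w hvw hrich a b c B hB
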